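/- Let w_j, w_k, w_l, w_m, m_α, m_β be nonzero complex numbers and set B = w_k/(m_α·w_j), E = w_l/(m_β·w_k), C = (w_j·w_l)/(w_m·w_k). Assume ‖B‖ < 1, ‖E‖ < 1, ‖C‖ < 1, and that B is not a nonpositive real number. Define f : ℂ → ℂ by f(w) = Li₂(w_m/(m_β·w_j)) + Li₂(w/(m_α·w_j)) − Li₂(w_l/(m_β·w)) − Li₂(w_l/(m_α·w_m)) + Li₂((w_j·w_l)/(w_m·w)) − π²/6 + log(w_m/(m_β·w_j))·log(w/(m_α·w_j)). Then f has derivative D at w_k, where D = (1/w_k)·(−log(1−B) − log(1−E) + log(1−C) + log(w_m/(m_β·w_j))), and moreover exp(w_k·D) = (w_j·w_l − w_k·w_m)/(((1/m_α)·w_k − w_j)·(m_β·w_k − w_l)). -/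

import Mathlib

/-!
For `‖z‖ < 1` the power series of `Li₂` may be differentiated termwise, and the derived series
is `-log (1 - z) / z`, so `z · Li₂'(z) = -log (1 - z)`. By the chain rule each dilogarithm
term of the potential contributes `∓ log (1 - ·) / w_k` and the logarithmic term contributes
`log (w_m / (m_β w_j)) / w_k`. Hence `w_k D` is a signed sum of logarithms, and `exp (w_k D)` is
`(1 - C) (w_m / (m_β w_j)) / ((1 - B) (1 - E))`, a rational function that simplifies to the
stated one.
-/

noncomputable def Li2 (z : ℂ) : ℂ := ∑' n : ℕ, z ^ (n + 1) / ((n : ℂ) + 1) ^ 2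

open Complex

lemma norm_pow_div_succ_le {w : ℂ} {r : ℝ} (hw : ‖w‖ ≤ r) (n : ℕ) :
    ‖w ^ n / ((n : ℂ) + 1)‖ ≤ r ^ n := by
  have hn : (1 : ℝ) ≤ ‖(n : ℂ) + 1‖ := by
    rw [← Nat.cast_succ, Complex.norm_natCast]
    exact_mod_cast Nat.succ_pos n
  calc ‖w ^ n / ((n : ℂ) + 1)‖ = ‖w‖ ^ n / ‖(n : ℂ) + 1‖ := by rw [norm_div, norm_pow]
    _ ≤ ‖w‖ ^ n := div_le_self (by positivity) hn
    _ ≤ r ^ n := pow_le_pow_left₀ (norm_nonneg w) hw n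

lemma hasDerivAt_Li2_tsum {z : ℂ} (hz : ‖z‖ < 1) :
    HasDerivAt Li2 (∑' n : ℕ, z ^ n / ((n : ℂ) + 1)) z := by
  obtain ⟨r, hzr, hr1⟩ := exists_between hz
  have hr0 : 0 ≤ r := (norm_nonneg z).trans hzr.le
  refine hasDerivAt_tsum_of_isPreconnected (summable_geometric_of_lt_one hr0 hr1)
    Metric.isOpen_ball (convex_ball (0 : ℂ) r).isPreconnected (fun n w _ => ?_)
    (fun n w hw => norm_pow_div_succ_le (mem_ball_zero_iff.mp hw).le n)
    (Metric.mem_ball_self ((norm_nonneg z).trans_lt hzr)) (by simp)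
    (mem_ball_zero_iff.mpr hzr)
  refine ((hasDerivAt_pow (n + 1) w).div_const (((n : ℂ) + 1) ^ 2)).congr_deriv ?_
  have : (n : ℂ) + 1 ≠ 0 := Nat.cast_add_one_ne_zero n
  push_cast
  field_simp

lemma hasSum_pow_div_succ {z : ℂ} (hz : ‖z‖ < 1) (hz0 : z ≠ 0) :
    HasSum (fun n : ℕ => z ^ n / ((n : ℂ) + 1)) (-log (1 - z) / z) := by
  have hshift : HasSum (fun n : ℕ => z ^ (n + 1) / ((n : ℂ) + 1)) (-log (1 - z)) := by
    simpa using (hasSum_nat_add_iff (f := fun n : ℕ => z ^ n / (n : ℂ)) 1).mpr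
      (by simpa using hasSum_taylorSeries_neg_log hz)
  refine (hshift.div_const z).congr_fun fun n => ?_
  rw [pow_succ]
  field_simp

lemma hasDerivAt_Li2 {z : ℂ} (hz : ‖z‖ < 1) (hz0 : z ≠ 0) :
    HasDerivAt Li2 (-log (1 - z) / z) z :=
  (hasSum_pow_div_succ hz hz0).tsum_eq ▸ hasDerivAt_Li2_tsum hz

lemma hasDerivAt_Li2_div_const {a w : ℂ} (ha : a ≠ 0) (hw : w ≠ 0) (hwa : ‖w / a‖ < 1) :
    HasDerivAt (fun v => Li2 (v / a)) (-log (1 - w / a) / w) w := by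
  refine ((hasDerivAt_Li2 hwa (div_ne_zero hw ha)).comp w
    ((hasDerivAt_id w).div_const a)).congr_deriv ?_
  field_simp

lemma hasDerivAt_Li2_const_div_mul {a b w : ℂ} (ha : a ≠ 0) (hb : b ≠ 0) (hw : w ≠ 0)
    (habw : ‖a / (b * w)‖ < 1) :
    HasDerivAt (fun v => Li2 (a / (b * v))) (log (1 - a / (b * w)) / w) w := by
  refine ((hasDerivAt_Li2 habw (div_ne_zero ha (mul_ne_zero hb hw))).comp w
    ((hasDerivAt_const w a).div ((hasDerivAt_id w).const_mul b) (mul_ne_zero hb hw))).congr_deriv ?_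
  simp only [id]
  field_simp
  ring

lemma hasDerivAt_log_div_const {a w : ℂ} (hw : w ≠ 0) (hwa : w / a ∈ slitPlane) :
    HasDerivAt (fun v => log (v / a)) (1 / w) w := by
  have ha : a ≠ 0 := by rintro rfl; simp at hwa
  refine ((hasDerivAt_log hwa).comp w ((hasDerivAt_id w).div_const a)).congr_deriv ?_
  field_simp

lemma mem_slitPlane_of_forall_ofReal_ne {z : ℂ} (h : ∀ r : ℝ, r ≤ 0 → (r : ℂ) ≠ z) :
    z ∈ slitPlane := by
  rw [mem_slitPlane_iff_not_le_zero]
  intro hz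
  obtain ⟨hre, him⟩ := nonpos_iff.mp hz
  exact h z.re hre (Complex.ext (ofReal_re _) (by simp [him]))

lemma exp_log_add_log_sub_log_sub_log {a b c d : ℂ} (ha : a ≠ 0) (hb : b ≠ 0) (hc : c ≠ 0)
    (hd : d ≠ 0) : exp (log a + log b - log c - log d) = a * b / (c * d) := by
  rw [exp_sub, exp_sub, exp_add, exp_log ha, exp_log hb, exp_log hc, exp_log hd, div_div]

lemma crossing_tau_eq {wj wk wl wm mα mβ : ℂ} (hwj : wj ≠ 0) (hwk : wk ≠ 0) (hwm : wm ≠ 0)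
    (hmα : mα ≠ 0) (hmβ : mβ ≠ 0) (hB : wk / (mα * wj) ≠ 1) (hE : wl / (mβ * wk) ≠ 1) :
    (1 - wj * wl / (wm * wk)) * (wm / (mβ * wj)) / ((1 - wk / (mα * wj)) * (1 - wl / (mβ * wk)))
      = (wj * wl - wk * wm) / ((1 / mα * wk - wj) * (mβ * wk - wl)) := by
  have h1 : mα * wj - wk ≠ 0 := by
    intro h; apply hB; rw [div_eq_one_iff_eq (mul_ne_zero hmα hwj)]; linear_combination -h
  have h2 : mβ * wk - wl ≠ 0 := by
    intro h; apply hE; rw [div_eq_one_iff_eq (mul_ne_zero hmβ hwk)]; linear_combination -h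
  have hden : (1 - wk / (mα * wj)) * (1 - wl / (mβ * wk)) ≠ 0 :=
    mul_ne_zero (sub_ne_zero.mpr hB.symm) (sub_ne_zero.mpr hE.symm)
  have hden' : (1 / mα * wk - wj) * (mβ * wk - wl) ≠ 0 := by
    refine mul_ne_zero (fun h => h1 ?_) h2
    field_simp at h
    linear_combination -h
  rw [div_eq_div_iff hden hden']
  field_simp
  ring

/-- The crossing potential of a positive crossing, viewed as a function of the
region variable `w_k`, has derivative `D` at `w_k`, and `exp (w_k * D) = τ_{c,k}`. -/
theorem crossing_potential_deriv_wk_pos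
    (wj wk wl wm mα mβ : ℂ)
    (hwj : wj ≠ 0) (hwk : wk ≠ 0) (hwl : wl ≠ 0) (hwm : wm ≠ 0)
    (hmα : mα ≠ 0) (hmβ : mβ ≠ 0)
    (B E C D : ℂ)
    (hB : B = wk / (mα * wj)) (hE : E = wl / (mβ * wk))
    (hC : C = (wj * wl) / (wm * wk))
    (hBnorm : ‖B‖ < 1) (hEnorm : ‖E‖ < 1) (hCnorm : ‖C‖ < 1)
    (hBreal : ∀ r : ℝ, r ≤ 0 → (r : ℂ) ≠ B)
    (hD : D = (1 / wk) * (-Complex.log (1 - B) - Complex.log (1 - E) + Complex.log (1 - C)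
      + Complex.log (wm / (mβ * wj)))) :
    HasDerivAt (fun w : ℂ =>
      Li2 (wm / (mβ * wj)) + Li2 (w / (mα * wj)) - Li2 (wl / (mβ * w)) - Li2 (wl / (mα * wm))
        + Li2 ((wj * wl) / (wm * w)) - (Real.pi : ℂ) ^ 2 / 6
        + Complex.log (wm / (mβ * wj)) * Complex.log (w / (mα * wj))) D wk ∧
    Complex.exp (wk * D) =
      (wj * wl - wk * wm) / (((1 / mα) * wk - wj) * (mβ * wk - wl)) := by
  subst hB hE hC hD
  have hLi2B := hasDerivAt_Li2_div_const (mul_ne_zero hmα hwj) hwk hBnorm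
  have hLi2E := hasDerivAt_Li2_const_div_mul hwl hmβ hwk hEnorm
  have hLi2C := hasDerivAt_Li2_const_div_mul (mul_ne_zero hwj hwl) hwm hwk hCnorm
  have hlog := (hasDerivAt_log_div_const hwk (mem_slitPlane_of_forall_ofReal_ne hBreal)).const_mul
    (log (wm / (mβ * wj)))
  refine ⟨(((((hLi2B.const_add _).sub hLi2E).sub_const _).add hLi2C).sub_const _ |>.add hlog)
    |>.congr_deriv (by ring), ?_⟩
  have hne_one {z : ℂ} (hz : ‖z‖ < 1) : z ≠ 1 := by rintro rfl; simp at hz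
  have hsub_ne {z : ℂ} (hz : ‖z‖ < 1) : 1 - z ≠ 0 := sub_ne_zero.mpr (hne_one hz).symm
  rw [← mul_assoc, mul_one_div_cancel hwk, one_mul,
    ← crossing_tau_eq hwj hwk hwm hmα hmβ (hne_one hBnorm) (hne_one hEnorm),
    ← exp_log_add_log_sub_log_sub_log (hsub_ne hCnorm) (div_ne_zero hwm (mul_ne_zero hmβ hwj))
      (hsub_ne hBnorm) (hsub_ne hEnorm)]
  congr 1
  ring
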